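/- arXiv:2412.05461 — 10 statements merged into one kernel-verified Lean document; each statement's English description precedes it below -/
import Mathlib

section
/- Let g, f1, f2, f3 be formal power series over ℚ such that g is supported on multiples of 3 with constant coefficient 1, and each fᵢ is supported on residue 1 mod 3 with coefficient of X equal to 1. Then the triple Riordan matrix a(n,k) = coeff n (g * f1^⌊(k+2)/3⌋ * f2^⌊(k+1)/3⌋ * f3^⌊k/3⌋) is lower triangular with unit diagonal: a(n,k) = 0 whenever k > n, and a(n,n) = 1 for all n. -/
open PowerSeries Finset

/-- The entry `a(n,k)` of the triple Riordan matrix associated to `(g, f1, f2, f3)`. -/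
noncomputable def tripleEntry (g f1 f2 f3 : PowerSeries ℚ) (n k : ℕ) : ℚ :=
  coeff n (g * f1 ^ ((k + 2) / 3) * f2 ^ ((k + 1) / 3) * f3 ^ (k / 3))

/-!
Each `fᵢ` has no constant term, so `fᵢ = X uᵢ` with `uᵢ(0) = [X] fᵢ`. The exponents in column `k`
add up to `k`, so the generating series of that column is `X ^ k` times a series whose constant
term is `g(0) u₁(0)^a u₂(0)^b u₃(0)^c = 1`.
-/

namespace PowerSeries

variable {R : Type*} [CommSemiring R]

theorem exists_eq_X_mul_of_constantCoeff_eq_zero {f : R⟦X⟧} (hf : constantCoeff f = 0) :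
    ∃ u, f = X * u ∧ constantCoeff u = coeff 1 f := by
  obtain ⟨u, rfl⟩ := X_dvd_iff.mpr hf
  exact ⟨u, rfl, by rw [coeff_succ_X_mul, coeff_zero_eq_constantCoeff_apply]⟩

theorem exists_pow_eq_X_pow_mul_of_constantCoeff_eq_zero {f : R⟦X⟧}
    (hf : constantCoeff f = 0) (m : ℕ) :
    ∃ u, f ^ m = X ^ m * u ∧ constantCoeff u = coeff 1 f ^ m := by
  obtain ⟨u, rfl, hu⟩ := exists_eq_X_mul_of_constantCoeff_eq_zero hf
  exact ⟨u ^ m, mul_pow X u m, by rw [map_pow, hu]⟩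

end PowerSeries

theorem exists_triple_product_eq_X_pow_mul {R : Type*} [CommSemiring R] (g f1 f2 f3 : R⟦X⟧)
    (hf1 : constantCoeff f1 = 0) (hf2 : constantCoeff f2 = 0) (hf3 : constantCoeff f3 = 0)
    (k : ℕ) :
    ∃ Q, g * f1 ^ ((k + 2) / 3) * f2 ^ ((k + 1) / 3) * f3 ^ (k / 3) = X ^ k * Q ∧
      constantCoeff Q = constantCoeff g * coeff 1 f1 ^ ((k + 2) / 3) *
        coeff 1 f2 ^ ((k + 1) / 3) * coeff 1 f3 ^ (k / 3) := by
  obtain ⟨u1, e1, c1⟩ := exists_pow_eq_X_pow_mul_of_constantCoeff_eq_zero hf1 ((k + 2) / 3)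
  obtain ⟨u2, e2, c2⟩ := exists_pow_eq_X_pow_mul_of_constantCoeff_eq_zero hf2 ((k + 1) / 3)
  obtain ⟨u3, e3, c3⟩ := exists_pow_eq_X_pow_mul_of_constantCoeff_eq_zero hf3 (k / 3)
  have hk : k = (k + 2) / 3 + (k + 1) / 3 + k / 3 := by omega
  refine ⟨g * u1 * u2 * u3, ?_, by simp only [map_mul, c1, c2, c3]⟩
  rw [e1, e2, e3, hk, pow_add, pow_add, ← hk]
  ring

theorem tripleRiordan_lower_triangular_unit_diagonal_general
    (g f1 f2 f3 : PowerSeries ℚ)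
    (hg0 : coeff 0 g = 1)
    (hf1 : ∀ n : ℕ, n % 3 ≠ 1 → coeff n f1 = 0) (hf1' : coeff 1 f1 = 1)
    (hf2 : ∀ n : ℕ, n % 3 ≠ 1 → coeff n f2 = 0) (hf2' : coeff 1 f2 = 1)
    (hf3 : ∀ n : ℕ, n % 3 ≠ 1 → coeff n f3 = 0) (hf3' : coeff 1 f3 = 1) :
    (∀ n k : ℕ, n < k → tripleEntry g f1 f2 f3 n k = 0) ∧
      (∀ n : ℕ, tripleEntry g f1 f2 f3 n n = 1) := by
  have column : ∀ k, ∃ Q, g * f1 ^ ((k + 2) / 3) * f2 ^ ((k + 1) / 3) * f3 ^ (k / 3) =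
      X ^ k * Q ∧ constantCoeff Q = 1 := fun k => by
    obtain ⟨Q, hQ, hQ0⟩ := exists_triple_product_eq_X_pow_mul g f1 f2 f3
      (by simpa using hf1 0) (by simpa using hf2 0) (by simpa using hf3 0) k
    rw [← coeff_zero_eq_constantCoeff_apply g, hg0, hf1', hf2', hf3'] at hQ0
    exact ⟨Q, hQ, by simpa using hQ0⟩
  constructor
  · intro n k hnk
    obtain ⟨Q, hQ, -⟩ := column k
    rw [tripleEntry, hQ, coeff_X_pow_mul', if_neg (by omega)]
  · intro n
    obtain ⟨Q, hQ, hQ0⟩ := column n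
    rw [tripleEntry, hQ, coeff_X_pow_mul', if_pos le_rfl, Nat.sub_self,
      coeff_zero_eq_constantCoeff_apply, hQ0]

theorem tripleRiordan_lower_triangular_unit_diagonal
    (g f1 f2 f3 : PowerSeries ℚ)
    (hg : ∀ n : ℕ, n % 3 ≠ 0 → coeff n g = 0) (hg0 : coeff 0 g = 1)
    (hf1 : ∀ n : ℕ, n % 3 ≠ 1 → coeff n f1 = 0) (hf1' : coeff 1 f1 = 1)
    (hf2 : ∀ n : ℕ, n % 3 ≠ 1 → coeff n f2 = 0) (hf2' : coeff 1 f2 = 1)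
    (hf3 : ∀ n : ℕ, n % 3 ≠ 1 → coeff n f3 = 0) (hf3' : coeff 1 f3 = 1) :
    (∀ n k : ℕ, n < k → tripleEntry g f1 f2 f3 n k = 0) ∧
      (∀ n : ℕ, tripleEntry g f1 f2 f3 n n = 1) :=
  tripleRiordan_lower_triangular_unit_diagonal_general g f1 f2 f3 hg0 hf1 hf1' hf2 hf2' hf3 hf3'
end

section
/- Let g, f1, f2, f3 be formal power series over ℚ such that g is supported on multiples of 3 and each fᵢ is supported on residue 1 mod 3. Then the triple Riordan matrix has the mod-3 checkerboard property: a(n,k) = coeff n (g * f1^⌊(k+2)/3⌋ * f2^⌊(k+1)/3⌋ * f3^⌊k/3⌋) = 0 whenever n % 3 ≠ k % 3. -/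
open PowerSeries Finset

namespace PowerSeries

variable {R : Type*} [CommSemiring R] {m : ℕ}

def SupportedModEq (m r : ℕ) (f : R⟦X⟧) : Prop :=
  ∀ n, coeff n f ≠ 0 → n ≡ r [MOD m]

theorem supportedModEq_iff {r : ℕ} {f : R⟦X⟧} :
    SupportedModEq m r f ↔ ∀ n, n % m ≠ r % m → coeff n f = 0 :=
  forall_congr' fun _ => not_imp_comm

theorem supportedModEq_one : SupportedModEq m 0 (1 : R⟦X⟧) := by
  intro n hn
  rw [coeff_one, ne_eq, ite_eq_right_iff, not_forall] at hn
  rw [hn.1]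

theorem SupportedModEq.mul {r s : ℕ} {f g : R⟦X⟧} (hf : SupportedModEq m r f)
    (hg : SupportedModEq m s g) : SupportedModEq m (r + s) (f * g) := by
  intro n hn
  rw [coeff_mul] at hn
  obtain ⟨⟨i, j⟩, hij, hne⟩ := exists_ne_zero_of_sum_ne_zero hn
  rw [← HasAntidiagonal.mem_antidiagonal.1 hij]
  exact (hf i (left_ne_zero_of_mul hne)).add (hg j (right_ne_zero_of_mul hne))

theorem SupportedModEq.pow {r : ℕ} {f : R⟦X⟧} (hf : SupportedModEq m r f) :
    ∀ k : ℕ, SupportedModEq m (k * r) (f ^ k)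
  | 0 => by simpa using supportedModEq_one
  | k + 1 => by simpa [pow_succ, add_mul] using (hf.pow k).mul hf

end PowerSeries

theorem tripleRiordan_checkerboard
    (g f1 f2 f3 : PowerSeries ℚ)
    (hg : ∀ n : ℕ, n % 3 ≠ 0 → coeff n g = 0)
    (hf1 : ∀ n : ℕ, n % 3 ≠ 1 → coeff n f1 = 0)
    (hf2 : ∀ n : ℕ, n % 3 ≠ 1 → coeff n f2 = 0)
    (hf3 : ∀ n : ℕ, n % 3 ≠ 1 → coeff n f3 = 0) :
    ∀ n k : ℕ, n % 3 ≠ k % 3 → tripleEntry g f1 f2 f3 n k = 0 := by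
  intro n k hnk
  have hg₃ : SupportedModEq 3 0 g := supportedModEq_iff.2 hg
  have hf₃ (f : ℚ⟦X⟧) (hf : ∀ n : ℕ, n % 3 ≠ 1 → coeff n f = 0) : SupportedModEq 3 1 f :=
    supportedModEq_iff.2 hf
  have hentry := ((hg₃.mul ((hf₃ f1 hf1).pow ((k + 2) / 3))).mul
    ((hf₃ f2 hf2).pow ((k + 1) / 3))).mul ((hf₃ f3 hf3).pow (k / 3))
  have hdeg : 0 + (k + 2) / 3 * 1 + (k + 1) / 3 * 1 + k / 3 * 1 = k := by omega
  rw [hdeg, supportedModEq_iff] at hentry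
  exact hentry n hnk
end

section
/- Let g, G, f1, f2, f3, F1, F2, F3, h, q1, q2, q3 be formal power series over ℚ such that: g and G are supported on multiples of 3; each fᵢ and each Fᵢ is supported on residue 1 mod 3; h has zero constant coefficient with h^3 = f1*f2*f3; and fᵢ = h*qᵢ for i = 1,2,3. Write e1(k) = ⌊(k+2)/3⌋, e2(k) = ⌊(k+1)/3⌋, e3(k) = ⌊k/3⌋. Then the matrix representing the triple Riordan product equals the product of the representing matrices: for all natural numbers n and k, ∑_{j=0}^{n} [coeff n (g * f1^{e1(j)} * f2^{e2(j)} * f3^{e3(j)})] * [coeff j (G * F1^{e1(k)} * F2^{e2(k)} * F3^{e3(k)})] = coeff n ((g * subst h G) * (q1 * subst h F1)^{e1(k)} * (q2 * subst h F2)^{e2(k)} * (q3 * subst h F3)^{e3(k)}). -/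
open PowerSeries Finset

/-- Substitution of the power series `h` (with zero constant coefficient) into `F`. -/
noncomputable def psSubst (h F : PowerSeries ℚ) : PowerSeries ℚ :=
  PowerSeries.mk fun n => ∑ k ∈ range (n + 1), coeff k F * coeff n (h ^ k)

/-!
Substitution `F ↦ F(h)` is a ring homomorphism, so the right-hand side is the `n`-th coefficient
of `Q · M(h)` with `Q = g q1^e1 q2^e2 q3^e3` and `M = G F1^e1 F2^e2 F3^e3` (exponents at `k`),
that is `∑ⱼ [Xʲ]M · [Xⁿ](Q hʲ)`. By the support hypotheses `[Xʲ]M` vanishes unless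
`j = k + 3d`, and then `e·(j) = e·(k) + d`, so `h³ = f1 f2 f3` turns the `j`-th column
`g f1^e1(j) f2^e2(j) f3^e3(j)` with `fᵢ = h qᵢ` into `Q hʲ`.
-/

namespace PowerSeries

section Support

variable {R : Type*} [CommSemiring R]

def SupportedOnResidue (m r : ℕ) (A : R⟦X⟧) : Prop :=
  ∀ n, ¬ n ≡ r [MOD m] → coeff n A = 0

namespace SupportedOnResidue

variable {m r s : ℕ} {A B : R⟦X⟧}

theorem modEq_of_coeff_ne_zero (hA : SupportedOnResidue m r A) {n : ℕ} (hn : coeff n A ≠ 0) :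
    n ≡ r [MOD m] :=
  not_not.mp (mt (hA n) hn)

theorem one : SupportedOnResidue m 0 (1 : R⟦X⟧) := by
  intro n hn
  rw [coeff_one, if_neg]
  rintro rfl
  exact hn rfl

theorem mul (hA : SupportedOnResidue m r A) (hB : SupportedOnResidue m s B) :
    SupportedOnResidue m (r + s) (A * B) := by
  intro n hn
  rw [coeff_mul]
  refine sum_eq_zero fun p hp => ?_
  rw [HasAntidiagonal.mem_antidiagonal] at hp
  by_cases hp1 : p.1 ≡ r [MOD m]
  · rw [hB p.2 fun hp2 => hn (hp ▸ hp1.add hp2), mul_zero]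
  · rw [hA p.1 hp1, zero_mul]

theorem pow (hA : SupportedOnResidue m r A) (k : ℕ) :
    SupportedOnResidue m (k * r) (A ^ k) := by
  induction k with
  | zero => simpa using one
  | succ k ih => simpa [pow_succ, add_mul] using ih.mul hA

end SupportedOnResidue

end Support

section Column

def tripleRiordanColumn {M : Type*} [Monoid M] (g f1 f2 f3 : M) (k : ℕ) : M :=
  g * f1 ^ ((k + 2) / 3) * f2 ^ ((k + 1) / 3) * f3 ^ (k / 3)

theorem tripleRiordanColumn_add_three_mul {M : Type*} [CommMonoid M] {g h q1 q2 q3 : M}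
    (hh3 : h ^ 3 = h * q1 * (h * q2) * (h * q3)) (k d : ℕ) :
    tripleRiordanColumn g (h * q1) (h * q2) (h * q3) (k + 3 * d) =
      tripleRiordanColumn g q1 q2 q3 k * h ^ (k + 3 * d) := by
  unfold tripleRiordanColumn
  obtain ⟨a, b, c, ha, hb, hc, rfl⟩ : ∃ a b c, (k + 2) / 3 = a ∧ (k + 1) / 3 = b ∧ k / 3 = c ∧
      k = a + b + c := ⟨_, _, _, rfl, rfl, rfl, by omega⟩
  rw [show (a + b + c + 3 * d + 2) / 3 = a + d by omega,
    show (a + b + c + 3 * d + 1) / 3 = b + d by omega,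
    show (a + b + c + 3 * d) / 3 = c + d by omega, ha, hb, hc]
  calc g * (h * q1) ^ (a + d) * (h * q2) ^ (b + d) * (h * q3) ^ (c + d)
      = g * q1 ^ a * q2 ^ b * q3 ^ c * h ^ (a + b + c) *
          (h * q1 * (h * q2) * (h * q3)) ^ d := by
        simp only [mul_pow, pow_add]; ac_rfl
    _ = g * q1 ^ a * q2 ^ b * q3 ^ c * h ^ (a + b + c + 3 * d) := by
      rw [← hh3, ← pow_mul, mul_assoc, ← pow_add]

theorem tripleRiordanColumn_mul {M : Type*} [CommMonoid M] (g f1 f2 f3 G F1 F2 F3 : M) (k : ℕ) :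
    tripleRiordanColumn (g * G) (f1 * F1) (f2 * F2) (f3 * F3) k =
      tripleRiordanColumn g f1 f2 f3 k * tripleRiordanColumn G F1 F2 F3 k := by
  simp only [tripleRiordanColumn, mul_pow]; ac_rfl

theorem map_tripleRiordanColumn {M N F : Type*} [Monoid M] [Monoid N] [FunLike F M N]
    [MonoidHomClass F M N] (φ : F) (g f1 f2 f3 : M) (k : ℕ) :
    φ (tripleRiordanColumn g f1 f2 f3 k) = tripleRiordanColumn (φ g) (φ f1) (φ f2) (φ f3) k := by
  simp only [tripleRiordanColumn, map_mul, map_pow]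

variable {R : Type*} [CommSemiring R]

theorem X_pow_dvd_tripleRiordanColumn {g f1 f2 f3 : R⟦X⟧} (h1 : constantCoeff f1 = 0)
    (h2 : constantCoeff f2 = 0) (h3 : constantCoeff f3 = 0) (k : ℕ) :
    X ^ k ∣ tripleRiordanColumn g f1 f2 f3 k := by
  have hk : k = (k + 2) / 3 + (k + 1) / 3 + k / 3 := by omega
  conv_lhs => rw [hk, pow_add, pow_add]
  exact mul_dvd_mul (mul_dvd_mul (dvd_mul_of_dvd_right
    (pow_dvd_pow_of_dvd (X_dvd_iff.mpr h1) _) g) (pow_dvd_pow_of_dvd (X_dvd_iff.mpr h2) _))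
    (pow_dvd_pow_of_dvd (X_dvd_iff.mpr h3) _)

theorem SupportedOnResidue.tripleRiordanColumn {m r s : ℕ} {g f1 f2 f3 : R⟦X⟧}
    (hg : SupportedOnResidue m r g) (hf1 : SupportedOnResidue m s f1)
    (hf2 : SupportedOnResidue m s f2) (hf3 : SupportedOnResidue m s f3) (k : ℕ) :
    SupportedOnResidue m (r + k * s) (tripleRiordanColumn g f1 f2 f3 k) := by
  have hk : r + k * s = r + (k + 2) / 3 * s + (k + 1) / 3 * s + k / 3 * s := by
    rw [add_assoc, add_assoc, ← add_mul, ← add_mul]; congr 2; omega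
  rw [hk]
  exact ((hg.mul (hf1.pow _)).mul (hf2.pow _)).mul (hf3.pow _)

theorem exists_eq_add_three_mul_of_coeff_tripleRiordanColumn_ne_zero {G F1 F2 F3 : R⟦X⟧}
    (hG : SupportedOnResidue 3 0 G) (hF1 : SupportedOnResidue 3 1 F1)
    (hF2 : SupportedOnResidue 3 1 F2) (hF3 : SupportedOnResidue 3 1 F3) {k j : ℕ}
    (hj : coeff j (tripleRiordanColumn G F1 F2 F3 k) ≠ 0) : ∃ d, j = k + 3 * d := by
  have hmod : j % 3 = k % 3 := by
    simpa [Nat.ModEq] using (hG.tripleRiordanColumn hF1 hF2 hF3 k).modEq_of_coeff_ne_zero hj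
  have hle : k ≤ j := by
    by_contra! hlt
    refine hj (X_pow_dvd_iff.mp (X_pow_dvd_tripleRiordanColumn ?_ ?_ ?_ k) j hlt) <;>
      rw [← coeff_zero_eq_constantCoeff_apply]
    exacts [hF1 0 (by decide), hF2 0 (by decide), hF3 0 (by decide)]
  exact ⟨(j - k) / 3, by omega⟩

end Column

section Subst

theorem coeff_pow_of_lt {R : Type*} [CommSemiring R] {h : R⟦X⟧} (hh : constantCoeff h = 0)
    {m j : ℕ} (hmj : m < j) : coeff m (h ^ j) = 0 :=
  coeff_of_lt_order _ ((Nat.cast_lt.mpr hmj).trans_le (le_order_pow_of_constantCoeff_eq_zero j hh))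

variable {h : ℚ⟦X⟧}

theorem coeff_psSubst_of_le (hh : constantCoeff h = 0) (A : ℚ⟦X⟧) {m n : ℕ} (hmn : m ≤ n) :
    coeff m (psSubst h A) = ∑ j ∈ range (n + 1), coeff j A * coeff m (h ^ j) := by
  rw [psSubst, coeff_mk]
  refine sum_subset (range_subset_range.mpr (by omega)) fun j _ hj => ?_
  rw [coeff_pow_of_lt hh (by simpa using hj), mul_zero]

theorem psSubst_eq_subst (hh : constantCoeff h = 0) (A : ℚ⟦X⟧) : psSubst h A = A.subst h := by
  ext n
  rw [coeff_subst' (HasSubst.of_constantCoeff_zero' hh), coeff_psSubst_of_le hh A le_rfl]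
  refine (finsum_eq_sum_of_support_subset _ fun j hj => ?_).symm
  by_contra hjn
  exact hj (by simp [coeff_pow_of_lt hh (show n < j by simpa using hjn)])

theorem coeff_mul_psSubst (hh : constantCoeff h = 0) (P A : ℚ⟦X⟧) (n : ℕ) :
    coeff n (P * psSubst h A) = ∑ j ∈ range (n + 1), coeff j A * coeff n (P * h ^ j) := by
  simp only [coeff_mul, mul_sum]
  rw [sum_comm]
  refine sum_congr rfl fun p hp => ?_
  rw [coeff_psSubst_of_le hh A (HasAntidiagonal.antidiagonal.snd_le hp), mul_sum]
  exact sum_congr rfl fun j _ => by ring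

end Subst

end PowerSeries

theorem tripleRiordan_matrix_product_general
    (g G f1 f2 f3 F1 F2 F3 h q1 q2 q3 : PowerSeries ℚ)
    (hG : ∀ n : ℕ, n % 3 ≠ 0 → coeff n G = 0)
    (hF1 : ∀ n : ℕ, n % 3 ≠ 1 → coeff n F1 = 0)
    (hF2 : ∀ n : ℕ, n % 3 ≠ 1 → coeff n F2 = 0)
    (hF3 : ∀ n : ℕ, n % 3 ≠ 1 → coeff n F3 = 0)
    (hh0 : coeff 0 h = 0)
    (hh3 : h ^ 3 = f1 * f2 * f3)
    (hq1 : f1 = h * q1) (hq2 : f2 = h * q2) (hq3 : f3 = h * q3) :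
    ∀ n k : ℕ,
      ∑ j ∈ range (n + 1),
        (coeff n (g * f1 ^ ((j + 2) / 3) * f2 ^ ((j + 1) / 3) * f3 ^ (j / 3))) *
          (coeff j (G * F1 ^ ((k + 2) / 3) * F2 ^ ((k + 1) / 3) * F3 ^ (k / 3))) =
      coeff n ((g * psSubst h G) * (q1 * psSubst h F1) ^ ((k + 2) / 3) *
        (q2 * psSubst h F2) ^ ((k + 1) / 3) * (q3 * psSubst h F3) ^ (k / 3)) := by
  intro n k
  subst hq1 hq2 hq3
  have hh : constantCoeff h = 0 := by rwa [← coeff_zero_eq_constantCoeff_apply]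
  have hsubst : psSubst h = substAlgHom (HasSubst.of_constantCoeff_zero' hh) := by
    ext1 A; rw [coe_substAlgHom, psSubst_eq_subst hh]
  change ∑ j ∈ range (n + 1), coeff n (tripleRiordanColumn g (h * q1) (h * q2) (h * q3) j) *
      coeff j (tripleRiordanColumn G F1 F2 F3 k) =
    coeff n (tripleRiordanColumn (g * psSubst h G) (q1 * psSubst h F1) (q2 * psSubst h F2)
      (q3 * psSubst h F3) k)
  rw [tripleRiordanColumn_mul, hsubst, ← map_tripleRiordanColumn, ← hsubst, coeff_mul_psSubst hh]
  refine sum_congr rfl fun j _ => ?_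
  by_cases hj : coeff j (tripleRiordanColumn G F1 F2 F3 k) = 0
  · rw [hj, zero_mul, mul_zero]
  obtain ⟨d, rfl⟩ := exists_eq_add_three_mul_of_coeff_tripleRiordanColumn_ne_zero hG hF1 hF2 hF3 hj
  rw [tripleRiordanColumn_add_three_mul hh3, mul_comm]

theorem tripleRiordan_matrix_product
    (g G f1 f2 f3 F1 F2 F3 h q1 q2 q3 : PowerSeries ℚ)
    (hg : ∀ n : ℕ, n % 3 ≠ 0 → coeff n g = 0)
    (hG : ∀ n : ℕ, n % 3 ≠ 0 → coeff n G = 0)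
    (hf1 : ∀ n : ℕ, n % 3 ≠ 1 → coeff n f1 = 0)
    (hf2 : ∀ n : ℕ, n % 3 ≠ 1 → coeff n f2 = 0)
    (hf3 : ∀ n : ℕ, n % 3 ≠ 1 → coeff n f3 = 0)
    (hF1 : ∀ n : ℕ, n % 3 ≠ 1 → coeff n F1 = 0)
    (hF2 : ∀ n : ℕ, n % 3 ≠ 1 → coeff n F2 = 0)
    (hF3 : ∀ n : ℕ, n % 3 ≠ 1 → coeff n F3 = 0)
    (hh0 : coeff 0 h = 0)
    (hh3 : h ^ 3 = f1 * f2 * f3)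
    (hq1 : f1 = h * q1) (hq2 : f2 = h * q2) (hq3 : f3 = h * q3) :
    ∀ n k : ℕ,
      ∑ j ∈ range (n + 1),
        (coeff n (g * f1 ^ ((j + 2) / 3) * f2 ^ ((j + 1) / 3) * f3 ^ (j / 3))) *
          (coeff j (G * F1 ^ ((k + 2) / 3) * F2 ^ ((k + 1) / 3) * F3 ^ (k / 3))) =
      coeff n ((g * psSubst h G) * (q1 * psSubst h F1) ^ ((k + 2) / 3) *
        (q2 * psSubst h F2) ^ ((k + 1) / 3) * (q3 * psSubst h F3) ^ (k / 3)) :=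
  tripleRiordan_matrix_product_general g G f1 f2 f3 F1 F2 F3 h q1 q2 q3 hG hF1 hF2 hF3 hh0 hh3 hq1
    hq2 hq3
end

section
/- (Fundamental theorem of the triple Riordan group.) Let g, f1, f2, f3, h be formal power series over ℚ with g supported on multiples of 3, each fᵢ supported on residue 1 mod 3 with zero constant coefficient, h having zero constant coefficient and h^3 = f1*f2*f3. Then for every power series G supported on multiples of 3 and every natural number n: ∑_{k=0}^{n} a(n,k) * (coeff k G) = coeff n (g * subst h G), where a(n,k) = coeff n (g * f1^⌊(k+2)/3⌋ * f2^⌊(k+1)/3⌋ * f3^⌊k/3⌋). -/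
/-!
Only the columns k = 3j meet the support of G, and for those the three exponents
⌊(k+2)/3⌋, ⌊(k+1)/3⌋, ⌊k/3⌋ all equal j, so the column is g (f₁f₂f₃)^j = g h^k.
Summing these against the coefficients of G gives g · G(h): since h has no constant term,
h^k contributes nothing below degree k, so truncating the substitution at k ≤ n is harmless.
-/

open PowerSeries Finset

/-- Substitution of the power series `h` (with zero constant coefficient) into `F`. -/
noncomputable def subst (h F : PowerSeries ℚ) : PowerSeries ℚ :=
  PowerSeries.mk fun n => ∑ k ∈ range (n + 1), coeff k F * coeff n (h ^ k)

theorem pow_eq_of_pow_three_eq_mul {M : Type*} [CommMonoid M] {h a b c : M}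
    (habc : h ^ 3 = a * b * c) {k : ℕ} (hk : k % 3 = 0) :
    h ^ k = a ^ ((k + 2) / 3) * b ^ ((k + 1) / 3) * c ^ (k / 3) := by
  obtain ⟨j, rfl⟩ : 3 ∣ k := Nat.dvd_of_mod_eq_zero hk
  have h2 : (3 * j + 2) / 3 = j := by omega
  have h1 : (3 * j + 1) / 3 = j := by omega
  rw [h2, h1, Nat.mul_div_cancel_left j three_pos, pow_mul, habc, mul_pow, mul_pow]

theorem PowerSeries.coeff_pow_eq_zero_of_lt {R : Type*} [CommSemiring R] {h : R⟦X⟧}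
    (hh0 : constantCoeff h = 0) {m k : ℕ} (hmk : m < k) : coeff m (h ^ k) = 0 :=
  coeff_of_lt_order m ((Nat.cast_lt.mpr hmk).trans_le (le_order_pow_of_constantCoeff_eq_zero k hh0))

theorem coeff_subst_of_le {h : PowerSeries ℚ} (hh0 : coeff 0 h = 0) (G : PowerSeries ℚ)
    {m n : ℕ} (hmn : m ≤ n) :
    coeff m (_root_.subst h G) = ∑ k ∈ range (n + 1), coeff k G * coeff m (h ^ k) := by
  rw [coeff_zero_eq_constantCoeff_apply] at hh0
  rw [_root_.subst, coeff_mk]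
  refine sum_subset (range_subset_range.mpr (by omega)) fun k _ hk => ?_
  rw [coeff_pow_eq_zero_of_lt hh0 (by simpa using hk), mul_zero]

theorem coeff_mul_subst (g : PowerSeries ℚ) {h : PowerSeries ℚ} (hh0 : coeff 0 h = 0)
    (G : PowerSeries ℚ) (n : ℕ) :
    coeff n (g * _root_.subst h G) = ∑ k ∈ range (n + 1), coeff k G * coeff n (g * h ^ k) := by
  calc coeff n (g * _root_.subst h G)
      = ∑ p ∈ antidiagonal n, ∑ k ∈ range (n + 1),
          coeff k G * (coeff p.1 g * coeff p.2 (h ^ k)) := by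
        refine (coeff_mul _ _ _).trans (sum_congr rfl fun p hp => ?_)
        rw [coeff_subst_of_le hh0 G (HasAntidiagonal.antidiagonal.snd_le hp), mul_sum]
        exact sum_congr rfl fun k _ => mul_left_comm _ _ _
    _ = ∑ k ∈ range (n + 1), coeff k G * coeff n (g * h ^ k) := by
        rw [sum_comm]
        simp_rw [coeff_mul, mul_sum]

theorem tripleRiordan_fundamental_theorem_general
    (g f1 f2 f3 h : PowerSeries ℚ)
    (hh0 : coeff 0 h = 0)
    (hh3 : h ^ 3 = f1 * f2 * f3) :
    ∀ (G : PowerSeries ℚ), (∀ n : ℕ, n % 3 ≠ 0 → coeff n G = 0) →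
      ∀ n : ℕ,
        ∑ k ∈ range (n + 1),
          (coeff n (g * f1 ^ ((k + 2) / 3) * f2 ^ ((k + 1) / 3) * f3 ^ (k / 3))) *
            coeff k G =
        coeff n (g * _root_.subst h G) := by
  intro G hG n
  rw [coeff_mul_subst g hh0]
  refine sum_congr rfl fun k _ => ?_
  by_cases hk : k % 3 = 0
  · rw [pow_eq_of_pow_three_eq_mul hh3 hk, mul_comm]
    simp only [mul_assoc]
  · rw [hG k hk, mul_zero, zero_mul]

theorem tripleRiordan_fundamental_theorem
    (g f1 f2 f3 h : PowerSeries ℚ)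
    (hg : ∀ n : ℕ, n % 3 ≠ 0 → coeff n g = 0)
    (hf1 : ∀ n : ℕ, n % 3 ≠ 1 → coeff n f1 = 0) (hf1' : coeff 0 f1 = 0)
    (hf2 : ∀ n : ℕ, n % 3 ≠ 1 → coeff n f2 = 0) (hf2' : coeff 0 f2 = 0)
    (hf3 : ∀ n : ℕ, n % 3 ≠ 1 → coeff n f3 = 0) (hf3' : coeff 0 f3 = 0)
    (hh0 : coeff 0 h = 0)
    (hh3 : h ^ 3 = f1 * f2 * f3) :
    ∀ (G : PowerSeries ℚ), (∀ n : ℕ, n % 3 ≠ 0 → coeff n G = 0) →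
      ∀ n : ℕ,
        ∑ k ∈ range (n + 1),
          (coeff n (g * f1 ^ ((k + 2) / 3) * f2 ^ ((k + 1) / 3) * f3 ^ (k / 3))) *
            coeff k G =
        coeff n (g * _root_.subst h G) :=
  tripleRiordan_fundamental_theorem_general g f1 f2 f3 h hh0 hh3
end

section
/- Let g, f1, f2, f3 be formal power series over ℚ with g supported on multiples of 3 and each fᵢ supported on residue 1 mod 3 with zero constant coefficient. Then the row sums of the triple Riordan matrix have generating function g*(1 + f1 + f1*f2)*(1 - f1*f2*f3)⁻¹: for every natural number n, ∑_{k=0}^{n} a(n,k) = coeff n (g * (1 + f1 + f1*f2) * (1 - f1*f2*f3)⁻¹), where a(n,k) = coeff n (g * f1^⌊(k+2)/3⌋ * f2^⌊(k+1)/3⌋ * f3^⌊k/3⌋). -/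
open PowerSeries Finset

/-!
Grouping the columns in blocks `3m, 3m + 1, 3m + 2` turns the row sum into
`∑ₘ [Xⁿ] g (1 + f1 + f1 f2) (f1 f2 f3)ᵐ`. Since each `fᵢ` is divisible by `X`, the entry
`a(n,k)` vanishes for `k > n`, and the geometric series `(1 - f1 f2 f3)⁻¹` may be truncated
at `m = n` when reading off the `n`-th coefficient.
-/

theorem Finset.sum_range_three_mul {M : Type*} [AddCommMonoid M] (f : ℕ → M) (N : ℕ) :
    ∑ k ∈ range (3 * N), f k =
      ∑ m ∈ range N, (f (3 * m) + f (3 * m + 1) + f (3 * m + 2)) := by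
  induction N with
  | zero => simp
  | succ N ih =>
    rw [show 3 * (N + 1) = 3 * N + 1 + 1 + 1 by ring, sum_range_succ, sum_range_succ,
      sum_range_succ, sum_range_succ, ih]
    abel

namespace PowerSeries

theorem X_pow_add_add_dvd_mul_pow {R : Type*} [CommSemiring R] {f1 f2 f3 : R⟦X⟧}
    (h1 : X ∣ f1) (h2 : X ∣ f2) (h3 : X ∣ f3) (a b c : ℕ) :
    X ^ (a + b + c) ∣ f1 ^ a * f2 ^ b * f3 ^ c := by
  rw [pow_add, pow_add]
  exact mul_dvd_mul (mul_dvd_mul (pow_dvd_pow_of_dvd h1 a) (pow_dvd_pow_of_dvd h2 b))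
    (pow_dvd_pow_of_dvd h3 c)

theorem inv_one_sub_eq_sum_add {k : Type*} [Field k] {f : k⟦X⟧} (hf : X ∣ f) (N : ℕ) :
    (1 - f)⁻¹ = ∑ m ∈ range N, f ^ m + f ^ N * (1 - f)⁻¹ := by
  have hinv : (1 - f) * (1 - f)⁻¹ = 1 :=
    PowerSeries.mul_inv_cancel _ (by simp [X_dvd_iff.mp hf])
  linear_combination (∑ m ∈ range N, f ^ m) * hinv + (1 - f)⁻¹ * geom_sum_mul f N

theorem coeff_mul_inv_one_sub {k : Type*} [Field k] {f : k⟦X⟧} (hf : X ∣ f)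
    (h : k⟦X⟧) (n : ℕ) :
    coeff n (h * (1 - f)⁻¹) = ∑ m ∈ range (n + 1), coeff n (h * f ^ m) := by
  have htail : coeff n (h * (f ^ (n + 1) * (1 - f)⁻¹)) = 0 := by
    exact X_pow_dvd_iff.mp (((pow_dvd_pow_of_dvd hf _).mul_right _).mul_left _) n n.lt_succ_self
  rw [inv_one_sub_eq_sum_add hf (n + 1), mul_add, map_add, htail, add_zero, mul_sum, map_sum]

end PowerSeries

section TripleEntry

variable (g f1 f2 f3 : PowerSeries ℚ) (n : ℕ)

theorem tripleEntry_eq_zero_of_lt (hf1 : X ∣ f1) (hf2 : X ∣ f2) (hf3 : X ∣ f3) {k : ℕ}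
    (hnk : n < k) : tripleEntry g f1 f2 f3 n k = 0 := by
  have hdvd :=
    (X_pow_add_add_dvd_mul_pow hf1 hf2 hf3 ((k + 2) / 3) ((k + 1) / 3) (k / 3)).mul_left g
  rw [tripleEntry, mul_assoc, mul_assoc, ← mul_assoc (f1 ^ _)]
  -- the three exponents add up to `k`
  exact X_pow_dvd_iff.mp hdvd n (by omega)

theorem tripleEntry_three_mul (m : ℕ) :
    tripleEntry g f1 f2 f3 n (3 * m) = coeff n (g * (f1 * f2 * f3) ^ m) := by
  rw [tripleEntry, show (3 * m + 2) / 3 = m by omega, show (3 * m + 1) / 3 = m by omega,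
    show 3 * m / 3 = m by omega]
  ring_nf

theorem tripleEntry_three_mul_add_one (m : ℕ) :
    tripleEntry g f1 f2 f3 n (3 * m + 1) = coeff n (g * f1 * (f1 * f2 * f3) ^ m) := by
  rw [tripleEntry, show (3 * m + 1 + 2) / 3 = m + 1 by omega,
    show (3 * m + 1 + 1) / 3 = m by omega, show (3 * m + 1) / 3 = m by omega]
  ring_nf

theorem tripleEntry_three_mul_add_two (m : ℕ) :
    tripleEntry g f1 f2 f3 n (3 * m + 2) = coeff n (g * f1 * f2 * (f1 * f2 * f3) ^ m) := by
  rw [tripleEntry, show (3 * m + 2 + 2) / 3 = m + 1 by omega,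
    show (3 * m + 2 + 1) / 3 = m + 1 by omega, show (3 * m + 2) / 3 = m by omega]
  ring_nf

theorem sum_range_tripleEntry (hf1 : X ∣ f1) (hf2 : X ∣ f2) (hf3 : X ∣ f3) :
    ∑ k ∈ range (n + 1), tripleEntry g f1 f2 f3 n k =
      ∑ m ∈ range (n + 1), coeff n (g * (1 + f1 + f1 * f2) * (f1 * f2 * f3) ^ m) := by
  have hext : ∑ k ∈ range (n + 1), tripleEntry g f1 f2 f3 n k =
      ∑ k ∈ range (3 * (n + 1)), tripleEntry g f1 f2 f3 n k := by
    refine sum_subset (fun k hk ↦ by simp only [mem_range] at hk ⊢; omega) fun k _ hk ↦ ?_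
    exact tripleEntry_eq_zero_of_lt g f1 f2 f3 n hf1 hf2 hf3 (by simpa using hk)
  rw [hext, sum_range_three_mul]
  refine sum_congr rfl fun m _ ↦ ?_
  rw [tripleEntry_three_mul, tripleEntry_three_mul_add_one, tripleEntry_three_mul_add_two,
    ← map_add, ← map_add]
  ring_nf

end TripleEntry

theorem tripleRiordan_row_sums_general
    (g f1 f2 f3 : PowerSeries ℚ)
    (hf1' : coeff 0 f1 = 0)
    (hf2' : coeff 0 f2 = 0)
    (hf3' : coeff 0 f3 = 0) :
    ∀ n : ℕ,
      ∑ k ∈ range (n + 1), tripleEntry g f1 f2 f3 n k =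
        coeff n (g * (1 + f1 + f1 * f2) * (1 - f1 * f2 * f3)⁻¹) := by
  intro n
  have hX {f : PowerSeries ℚ} (hf : coeff 0 f = 0) : X ∣ f :=
    X_dvd_iff.mpr (by rwa [← coeff_zero_eq_constantCoeff_apply])
  rw [coeff_mul_inv_one_sub (((hX hf1').mul_right _).mul_right _),
    sum_range_tripleEntry g f1 f2 f3 n (hX hf1') (hX hf2') (hX hf3')]

theorem tripleRiordan_row_sums
    (g f1 f2 f3 : PowerSeries ℚ)
    (hg : ∀ n : ℕ, n % 3 ≠ 0 → coeff n g = 0)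
    (hf1 : ∀ n : ℕ, n % 3 ≠ 1 → coeff n f1 = 0) (hf1' : coeff 0 f1 = 0)
    (hf2 : ∀ n : ℕ, n % 3 ≠ 1 → coeff n f2 = 0) (hf2' : coeff 0 f2 = 0)
    (hf3 : ∀ n : ℕ, n % 3 ≠ 1 → coeff n f3 = 0) (hf3' : coeff 0 f3 = 0) :
    ∀ n : ℕ,
      ∑ k ∈ range (n + 1), tripleEntry g f1 f2 f3 n k =
        coeff n (g * (1 + f1 + f1 * f2) * (1 - f1 * f2 * f3)⁻¹) :=
  tripleRiordan_row_sums_general g f1 f2 f3 hf1' hf2' hf3'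
end

section
/- Let g, f1, f2, f3 be formal power series over ℚ with g supported on multiples of 3 and each fᵢ supported on residue 1 mod 3 with zero constant coefficient. Then the diagonal sums of the triple Riordan matrix have generating function g*(1 + X*f1 + X^2*f1*f2)*(1 - X^3*f1*f2*f3)⁻¹: for every natural number n, ∑_{(m,k), m+k=n} a(m,k) = coeff n (g * (1 + X*f1 + X^2*f1*f2) * (1 - X^3*f1*f2*f3)⁻¹), where a(m,k) = coeff m (g * f1^⌊(k+2)/3⌋ * f2^⌊(k+1)/3⌋ * f3^⌊k/3⌋) and the sum is over the antidiagonal m + k = n. -/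
/-!
Writing `c k = g * f1^⌊(k+2)/3⌋ * f2^⌊(k+1)/3⌋ * f3^⌊k/3⌋` for the `k`-th column,
the `n`-th diagonal sum is `coeff n (∑ₖ X^k * c k)`. Grouping the columns in blocks of three,
`X^(3q) c(3q) + X^(3q+1) c(3q+1) + X^(3q+2) c(3q+2) = g (1 + X f1 + X² f1 f2) (X³ f1 f2 f3)^q`,
so the column sum is `g (1 + X f1 + X² f1 f2)` times a geometric series in `X³ f1 f2 f3`.
Everything is truncated at a finite order, which does not change the `n`-th coefficient.
-/

open PowerSeries Finset

section Columns

variable {R : Type*} [CommSemiring R]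

def tripleColumn (g f1 f2 f3 : R) (k : ℕ) : R :=
  g * f1 ^ ((k + 2) / 3) * f2 ^ ((k + 1) / 3) * f3 ^ (k / 3)

theorem pow_mul_tripleColumn_block (x g f1 f2 f3 : R) (q : ℕ) :
    x ^ (3 * q) * tripleColumn g f1 f2 f3 (3 * q)
        + x ^ (3 * q + 1) * tripleColumn g f1 f2 f3 (3 * q + 1)
        + x ^ (3 * q + 2) * tripleColumn g f1 f2 f3 (3 * q + 2) =
      g * (1 + x * f1 + x ^ 2 * f1 * f2) * (x ^ 3 * f1 * f2 * f3) ^ q := by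
  simp only [tripleColumn, show (3 * q + 2) / 3 = q by omega, show (3 * q + 1) / 3 = q by omega,
    show 3 * q / 3 = q by omega, show (3 * q + 1 + 2) / 3 = q + 1 by omega,
    show (3 * q + 2 + 2) / 3 = q + 1 by omega]
  ring

theorem sum_range_pow_mul_tripleColumn (x g f1 f2 f3 : R) (N : ℕ) :
    ∑ k ∈ range (3 * N), x ^ k * tripleColumn g f1 f2 f3 k =
      g * (1 + x * f1 + x ^ 2 * f1 * f2) * ∑ q ∈ range N, (x ^ 3 * f1 * f2 * f3) ^ q := by
  induction N with
  | zero => simp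
  | succ N ih =>
    rw [show 3 * (N + 1) = 3 * N + 2 + 1 by ring, sum_range_succ, sum_range_succ, sum_range_succ,
      ih, sum_range_succ, mul_add (g * _), ← pow_mul_tripleColumn_block]
    ring

end Columns

theorem sum_antidiagonal_coeff_eq_coeff_sum_X_pow_mul {R : Type*} [CommSemiring R]
    (c : ℕ → R⟦X⟧) {n N : ℕ} (hn : n < N) :
    ∑ p ∈ antidiagonal n, coeff p.1 (c p.2) = coeff n (∑ k ∈ range N, X ^ k * c k) := by
  have hsub : range (n + 1) ⊆ range N := range_subset_range.mpr hn
  rw [← Nat.sum_antidiagonal_swap, Nat.sum_antidiagonal_eq_sum_range_succ_mk, map_sum,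
    ← sum_subset hsub fun k _ hk => by simp_all [coeff_X_pow_mul']]
  refine sum_congr rfl fun k hk => ?_
  rw [coeff_X_pow_mul', if_pos (Nat.lt_succ_iff.mp (mem_range.mp hk))]
  rfl

theorem coeff_mul_inv_one_sub_eq_coeff_mul_geom_sum {k : Type*} [Field k] (a u : k⟦X⟧)
    (hu : X ∣ u) {n N : ℕ} (hn : n < N) :
    coeff n (a * (1 - u)⁻¹) = coeff n (a * ∑ q ∈ range N, u ^ q) := by
  have hinv : (1 - u) * (1 - u)⁻¹ = 1 :=
    PowerSeries.mul_inv_cancel _ (by simp [X_dvd_iff.mp hu])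
  have hgeom := geom_sum_mul_neg u N
  have hsplit : (1 - u)⁻¹ = ∑ q ∈ range N, u ^ q + u ^ N * (1 - u)⁻¹ := by
    linear_combination (∑ q ∈ range N, u ^ q) * hinv - (1 - u)⁻¹ * hgeom
  have htail : X ^ N ∣ a * (u ^ N * (1 - u)⁻¹) :=
    (pow_dvd_pow_of_dvd hu N).trans ⟨a * (1 - u)⁻¹, by ring⟩
  rw [hsplit, mul_add, map_add, X_pow_dvd_iff.mp htail n hn, add_zero]

theorem tripleRiordan_diagonal_sums_general
    (g f1 f2 f3 : PowerSeries ℚ) :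
    ∀ n : ℕ,
      ∑ p ∈ Finset.HasAntidiagonal.antidiagonal n, tripleEntry g f1 f2 f3 p.1 p.2 =
        coeff n (g * (1 + X * f1 + X ^ 2 * f1 * f2) *
          (1 - X ^ 3 * f1 * f2 * f3)⁻¹) := by
  intro n
  have hX : X ∣ X ^ 3 * f1 * f2 * f3 := ⟨X ^ 2 * f1 * f2 * f3, by ring⟩
  calc ∑ p ∈ antidiagonal n, tripleEntry g f1 f2 f3 p.1 p.2
      = coeff n (∑ k ∈ range (3 * (n + 1)), X ^ k * tripleColumn g f1 f2 f3 k) :=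
        sum_antidiagonal_coeff_eq_coeff_sum_X_pow_mul (tripleColumn g f1 f2 f3)
          (by omega : n < 3 * (n + 1))
    _ = coeff n (g * (1 + X * f1 + X ^ 2 * f1 * f2) *
          ∑ q ∈ range (n + 1), (X ^ 3 * f1 * f2 * f3) ^ q) := by
        rw [sum_range_pow_mul_tripleColumn]
    _ = _ := (coeff_mul_inv_one_sub_eq_coeff_mul_geom_sum _ _ hX n.lt_succ_self).symm

theorem tripleRiordan_diagonal_sums
    (g f1 f2 f3 : PowerSeries ℚ)
    (hg : ∀ n : ℕ, n % 3 ≠ 0 → coeff n g = 0)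
    (hf1 : ∀ n : ℕ, n % 3 ≠ 1 → coeff n f1 = 0) (hf1' : coeff 0 f1 = 0)
    (hf2 : ∀ n : ℕ, n % 3 ≠ 1 → coeff n f2 = 0) (hf2' : coeff 0 f2 = 0)
    (hf3 : ∀ n : ℕ, n % 3 ≠ 1 → coeff n f3 = 0) (hf3' : coeff 0 f3 = 0) :
    ∀ n : ℕ,
      ∑ p ∈ Finset.HasAntidiagonal.antidiagonal n, tripleEntry g f1 f2 f3 p.1 p.2 =
        coeff n (g * (1 + X * f1 + X ^ 2 * f1 * f2) *
          (1 - X ^ 3 * f1 * f2 * f3)⁻¹) :=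
  tripleRiordan_diagonal_sums_general g f1 f2 f3
end

section
/- In PowerSeries ℚ, let g = (1 - X^3)⁻¹, f1 = X*(1 - X^3)⁻¹, f2 = X*(1 + X^3), f3 = X*(1 + X^3)⁻¹. Then the row-sum generating function of the associated triple Riordan matrix satisfies g*(1 + f1 + f1*f2)*(1 - f1*f2*f3)⁻¹ = (1 + X + X^2 - X^3 + X^5) * ((1 - X^3)*(1 - 2*X^3))⁻¹. -/
/-!
Power series with nonzero constant term are units, so the embedding of `ℚ⟦X⟧` into its fraction
field sends their power-series inverses to field inverses; by injectivity the claim becomes an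
identity of rational functions in `X`. There the factors `1 + X ^ 3` cancel in `f1 * f2 * f3`,
which is `X ^ 3 / (1 - X ^ 3)`, so `1 - f1 * f2 * f3 = (1 - 2 * X ^ 3) / (1 - X ^ 3)`.
-/

open PowerSeries

section

variable {k R : Type*} [Field k]

theorem PowerSeries.map_inv_of_constantCoeff_ne_zero [DivisionRing R] (f : k⟦X⟧ →+* R)
    {φ : k⟦X⟧} (h : constantCoeff φ ≠ 0) : f φ⁻¹ = (f φ)⁻¹ :=
  eq_inv_of_mul_eq_one_right <| by rw [← map_mul, PowerSeries.mul_inv_cancel φ h, map_one]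

theorem PowerSeries.map_ne_zero_of_constantCoeff_ne_zero [Semiring R] [Nontrivial R]
    (f : k⟦X⟧ →+* R) {φ : k⟦X⟧} (h : constantCoeff φ ≠ 0) : f φ ≠ 0 :=
  left_ne_zero_of_mul_eq_one <| by rw [← map_mul, PowerSeries.mul_inv_cancel φ h, map_one]

end

theorem example1_row_sums_gf_of_field {K : Type*} [Field K] {x : K} (h₁ : 1 - x ^ 3 ≠ 0)
    (h₂ : 1 + x ^ 3 ≠ 0) :
    (1 - x ^ 3)⁻¹ * (1 + x * (1 - x ^ 3)⁻¹ + x * (1 - x ^ 3)⁻¹ * (x * (1 + x ^ 3))) *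
        (1 - x * (1 - x ^ 3)⁻¹ * (x * (1 + x ^ 3)) * (x * (1 + x ^ 3)⁻¹))⁻¹ =
      (1 + x + x ^ 2 - x ^ 3 + x ^ 5) * ((1 - x ^ 3) * (1 - 2 * x ^ 3))⁻¹ := by
  have hden : 1 - x * (1 - x ^ 3)⁻¹ * (x * (1 + x ^ 3)) * (x * (1 + x ^ 3)⁻¹) =
      (1 - 2 * x ^ 3) / (1 - x ^ 3) := by
    field_simp
    ring
  rw [hden]
  field_simp
  ring

theorem example1_row_sums_gf :
    ((1 - X ^ 3)⁻¹ : PowerSeries ℚ) *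
        (1 + X * (1 - X ^ 3)⁻¹ + X * (1 - X ^ 3)⁻¹ * (X * (1 + X ^ 3))) *
        (1 - X * (1 - X ^ 3)⁻¹ * (X * (1 + X ^ 3)) * (X * (1 + X ^ 3)⁻¹))⁻¹ =
      (1 + X + X ^ 2 - X ^ 3 + X ^ 5) * ((1 - X ^ 3) * (1 - 2 * X ^ 3))⁻¹ := by
  have h₁ := map_ne_zero_of_constantCoeff_ne_zero (algebraMap ℚ⟦X⟧ (FractionRing ℚ⟦X⟧))
    (φ := 1 - X ^ 3) (by simp)
  have h₂ := map_ne_zero_of_constantCoeff_ne_zero (algebraMap ℚ⟦X⟧ (FractionRing ℚ⟦X⟧))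
    (φ := 1 + X ^ 3) (by simp)
  apply IsFractionRing.injective ℚ⟦X⟧ (FractionRing ℚ⟦X⟧)
  simp (disch := simp) only [map_mul, map_add, map_sub, map_one, map_pow, map_ofNat,
    map_inv_of_constantCoeff_ne_zero (algebraMap ℚ⟦X⟧ (FractionRing ℚ⟦X⟧))] at h₁ h₂ ⊢
  exact example1_row_sums_gf_of_field h₁ h₂
end

section
/- Let s = (1 + X + X^2 - X^3 + X^5) * ((1 - X^3)*(1 - 2*X^3))⁻¹ in PowerSeries ℚ. Then for every natural number n: coeff (3n) s = 2^n, coeff (3n+1) s = 2^{n+1} - 1, and coeff (3n+2) s = 3*2^n - 2. That is, s is the interleaving of the sequences 2^n, 2^{n+1}-1, and 3·2^n-2. -/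
/-!
Partial fractions: the series is `(1 + 2X + 3X²)/(1 - 2X³) - (X + 2X²)/(1 - X³)`. A sequence with
`u (k + d) = a * u k` has generating function `(u 0 + ⋯ + u (d-1) X^(d-1)) / (1 - a X^d)`, so the
two summands generate `(k % 3 + 1) * 2 ^ (k / 3)` and `k % 3`.
-/

open PowerSeries

namespace PowerSeries

variable {R : Type*} [CommRing R]

theorem mk_mul_one_sub_C_mul_X_pow {u : ℕ → R} {a : R} {d : ℕ}
    (hu : ∀ k, u (k + d) = a * u k) :
    mk u * (1 - C a * X ^ d) = ∑ k ∈ Finset.range d, C (u k) * X ^ k := by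
  ext k
  rw [mul_sub, mul_one, mul_left_comm, map_sub, coeff_C_mul, coeff_mul_X_pow', map_sum]
  simp only [coeff_C_mul_X_pow, coeff_mk, Finset.sum_ite_eq, Finset.mem_range]
  split_ifs with hdk hkd hkd
  · omega
  · obtain ⟨j, rfl⟩ := Nat.exists_eq_add_of_le' hdk
    rw [Nat.add_sub_cancel, hu, sub_self]
  · simp
  · omega

end PowerSeries

theorem example1_row_sums_interleaving :
    ∀ n : ℕ,
      coeff (R := ℚ) (3 * n)
          ((1 + X + X ^ 2 - X ^ 3 + X ^ 5) * ((1 - X ^ 3) * (1 - 2 * X ^ 3))⁻¹) =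
        2 ^ n ∧
      coeff (R := ℚ) (3 * n + 1)
          ((1 + X + X ^ 2 - X ^ 3 + X ^ 5) * ((1 - X ^ 3) * (1 - 2 * X ^ 3))⁻¹) =
        2 ^ (n + 1) - 1 ∧
      coeff (R := ℚ) (3 * n + 2)
          ((1 + X + X ^ 2 - X ^ 3 + X ^ 5) * ((1 - X ^ 3) * (1 - 2 * X ^ 3))⁻¹) =
        3 * 2 ^ n - 2 := by
  have hu : (mk fun k => ((k % 3 : ℕ) + 1 : ℚ) * 2 ^ (k / 3)) * (1 - 2 * X ^ 3) =
      1 + 2 * X + 3 * X ^ 2 := by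
    have := mk_mul_one_sub_C_mul_X_pow
      (u := fun k => ((k % 3 : ℕ) + 1 : ℚ) * 2 ^ (k / 3)) (a := 2) (d := 3) fun k => by
        rw [Nat.add_mod_right, Nat.add_div_right k three_pos, pow_succ]; ring
    norm_num [Finset.sum_range_succ, map_ofNat] at this
    exact this
  have hv : (mk fun k => ((k % 3 : ℕ) : ℚ)) * (1 - X ^ 3) = X + 2 * X ^ 2 := by
    have := mk_mul_one_sub_C_mul_X_pow
      (u := fun k => ((k % 3 : ℕ) : ℚ)) (a := 1) (d := 3) fun k => by
        rw [Nat.add_mod_right, one_mul]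
    norm_num [Finset.sum_range_succ] at this
    exact this
  have hs : (1 + X + X ^ 2 - X ^ 3 + X ^ 5) * ((1 - X ^ 3) * (1 - 2 * X ^ 3))⁻¹ =
      (mk fun k => ((k % 3 : ℕ) + 1 : ℚ) * 2 ^ (k / 3)) - mk fun k => ((k % 3 : ℕ) : ℚ) := by
    rw [eq_comm, eq_mul_inv_iff_mul_eq (by simp)]
    linear_combination (1 - X ^ 3 : ℚ⟦X⟧) * hu - (1 - 2 * X ^ 3 : ℚ⟦X⟧) * hv
  intro n
  simp only [hs, map_sub, coeff_mk, Nat.mul_add_mod, Nat.mul_add_div three_pos]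
  norm_num [pow_succ']
end

section
/- Let t = (1 + X)*(1 + X + X^2)*(1 - X - X^2)⁻¹ in PowerSeries ℚ. Then for every natural number n, coeff n t = 2*Fib(n+2) - (if n ≤ 1 then 1 else 0), where Fib is the Fibonacci sequence with Fib(1) = Fib(2) = 1. That is, t is the generating function of the sequence 2F_{n+2} - binomial(1,n), which begins 1, 3, 6, 10, 16, 26, …. -/
/-!
Since `(1 + X) * (1 + X + X ^ 2) = 2 * (1 + X) - (1 + X) * (1 - X - X ^ 2)`, the series equals
`2 * (1 + X) / (1 - X - X ^ 2) - (1 + X)`, and `(1 + X) / (1 - X - X ^ 2)` is the generating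
function of `Fib (n + 2)` by the Fibonacci recurrence.
-/

open PowerSeries

theorem mk_fib_add_two_mul_one_sub_X_sub_X_sq {R : Type*} [CommRing R] :
    (mk fun n => (Nat.fib (n + 2) : R)) * (1 - X - X ^ 2) = 1 + X := by
  ext n
  rw [mul_sub, mul_sub, mul_one, ← pow_one X]
  rcases n with _ | _ | n <;> simp [coeff_mul_X_pow', coeff_X, Nat.fib_add_two]

theorem one_add_X_mul_inv_eq_mk_fib {k : Type*} [Field k] :
    (1 + X) * (1 - X - X ^ 2 : k⟦X⟧)⁻¹ = mk fun n => (Nat.fib (n + 2) : k) :=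
  ((eq_mul_inv_iff_mul_eq (by simp)).2 mk_fib_add_two_mul_one_sub_X_sub_X_sq).symm

theorem coeff_one_add_X {R : Type*} [Semiring R] (n : ℕ) :
    coeff n (1 + X : R⟦X⟧) = if n ≤ 1 then 1 else 0 := by
  rcases n with _ | _ | n <;> simp [coeff_X]

theorem example2_aerated_sequence :
    ∀ n : ℕ,
      coeff n ((1 + X) * (1 + X + X ^ 2) * ((1 : PowerSeries ℚ) - X - X ^ 2)⁻¹) =
        2 * (Nat.fib (n + 2) : ℚ) - (if n ≤ 1 then 1 else 0) := by
  intro n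
  have hinv : (1 - X - X ^ 2 : ℚ⟦X⟧) * (1 - X - X ^ 2)⁻¹ = 1 :=
    PowerSeries.mul_inv_cancel _ (by simp)
  have hsplit : (1 + X) * (1 + X + X ^ 2) * ((1 : ℚ⟦X⟧) - X - X ^ 2)⁻¹ =
      2 * ((1 + X) * (1 - X - X ^ 2)⁻¹) - (1 + X) := by
    linear_combination (-(1 + X) : ℚ⟦X⟧) * hinv
  rw [hsplit, one_add_X_mul_inv_eq_mk_fib, map_sub, two_mul, map_add, coeff_mk, coeff_one_add_X]
  ring
end

section
/- (Quadruple Riordan group: triangularity and mod-4 checkerboard.) Let g, f1, f2, f3, f4 be formal power series over ℚ such that coeff n g = 0 whenever n % 4 ≠ 0 with constant coefficient of g equal to 1, and for each i, coeff n fᵢ = 0 whenever n % 4 ≠ 1 with coefficient of X in fᵢ equal to 1. Define b(n,k) = coeff n (g * f1^⌊(k+3)/4⌋ * f2^⌊(k+2)/4⌋ * f3^⌊(k+1)/4⌋ * f4^⌊k/4⌋). Then b(n,k) = 0 whenever k > n, b(n,n) = 1 for all n, and b(n,k) = 0 whenever n % 4 ≠ k % 4. -/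
/-!
Call `f` monic of order `a` if `f = X^a u` with `u(0) = 1`. Products of such series are monic
of the summed order, and likewise a series supported on exponents `≡ a` times one supported on
exponents `≡ b` (mod `m`) is supported on exponents `≡ a + b`. Column `k` of the matrix is `g`
(index `0`) times `⌊(k+3)/4⌋ + ⌊(k+2)/4⌋ + ⌊(k+1)/4⌋ + ⌊k/4⌋ = k` factors `fᵢ` of index `1`,
so it is monic of order `k`, which gives triangularity and the unit diagonal, and it is
supported on exponents `≡ k` (mod 4), which gives the checkerboard pattern.
-/

open PowerSeries Finset

namespace PowerSeries

variable {R : Type*} [CommSemiring R]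

def HasMonicOrder (a : ℕ) (f : R⟦X⟧) : Prop :=
  ∃ u : R⟦X⟧, constantCoeff u = 1 ∧ f = X ^ a * u

def ResidueSupported (m a : ℕ) (f : R⟦X⟧) : Prop :=
  ∀ n, ¬ n ≡ a [MOD m] → coeff n f = 0

namespace HasMonicOrder

variable {a b : ℕ} {f h : R⟦X⟧}

theorem one : HasMonicOrder 0 (1 : R⟦X⟧) :=
  ⟨1, map_one _, by rw [pow_zero, one_mul]⟩

theorem mul (hf : HasMonicOrder a f) (hh : HasMonicOrder b h) :
    HasMonicOrder (a + b) (f * h) := by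
  obtain ⟨u, hu, rfl⟩ := hf
  obtain ⟨v, hv, rfl⟩ := hh
  exact ⟨u * v, by rw [map_mul, hu, hv, one_mul], by ring⟩

theorem of_constantCoeff (hf : constantCoeff f = 1) : HasMonicOrder 0 f :=
  ⟨f, hf, by rw [pow_zero, one_mul]⟩

theorem of_coeff_one (hf₀ : constantCoeff f = 0) (hf₁ : coeff 1 f = 1) :
    HasMonicOrder 1 f := by
  obtain ⟨u, rfl⟩ := X_dvd_iff.mpr hf₀
  refine ⟨u, ?_, by rw [pow_one]⟩
  rwa [← coeff_zero_eq_constantCoeff_apply, ← coeff_succ_X_mul]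

theorem coeff_of_lt (hf : HasMonicOrder a f) {n : ℕ} (hn : n < a) : coeff n f = 0 := by
  obtain ⟨u, -, rfl⟩ := hf
  rw [coeff_X_pow_mul', if_neg (not_le.mpr hn)]

theorem coeff_self (hf : HasMonicOrder a f) : coeff a f = 1 := by
  obtain ⟨u, hu, rfl⟩ := hf
  rw [coeff_X_pow_mul', if_pos le_rfl, Nat.sub_self, coeff_zero_eq_constantCoeff_apply, hu]

end HasMonicOrder

namespace ResidueSupported

variable {m a b : ℕ} {f h : R⟦X⟧}

theorem one : ResidueSupported m 0 (1 : R⟦X⟧) := by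
  intro n hn
  rw [coeff_one, if_neg]
  rintro rfl
  exact hn rfl

theorem mul (hf : ResidueSupported m a f) (hh : ResidueSupported m b h) :
    ResidueSupported m (a + b) (f * h) := by
  intro n hn
  rw [coeff_mul]
  refine sum_eq_zero fun ⟨i, j⟩ hij => ?_
  rw [HasAntidiagonal.mem_antidiagonal] at hij
  by_cases hi : i ≡ a [MOD m]
  · have hj : ¬ j ≡ b [MOD m] := fun hj => hn (hij ▸ hi.add hj)
    rw [hh j hj, mul_zero]
  · rw [hf i hi, zero_mul]

end ResidueSupported

end PowerSeries

/-- The entry `b(n,k)` of the quadruple Riordan matrix associated to `(g, f1, f2, f3, f4)`. -/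
noncomputable def quadEntry (g f1 f2 f3 f4 : PowerSeries ℚ) (n k : ℕ) : ℚ :=
  coeff n (g * f1 ^ ((k + 3) / 4) * f2 ^ ((k + 2) / 4) * f3 ^ ((k + 1) / 4) *
    f4 ^ (k / 4))

section QuadColumn

variable {R : Type*} [CommSemiring R]

noncomputable def quadColumn (g f1 f2 f3 f4 : R⟦X⟧) (k : ℕ) : R⟦X⟧ :=
  g * f1 ^ ((k + 3) / 4) * f2 ^ ((k + 2) / 4) * f3 ^ ((k + 1) / 4) * f4 ^ (k / 4)

theorem quadEntry_eq_coeff_quadColumn (g f1 f2 f3 f4 : PowerSeries ℚ) (n k : ℕ) :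
    quadEntry g f1 f2 f3 f4 n k = coeff n (quadColumn g f1 f2 f3 f4 k) :=
  rfl

theorem quadColumn_induction (P : ℕ → R⟦X⟧ → Prop) (one : P 0 1)
    (mul : ∀ {a b : ℕ} {f h : R⟦X⟧}, P a f → P b h → P (a + b) (f * h))
    {g f1 f2 f3 f4 : R⟦X⟧} (hg : P 0 g) (h1 : P 1 f1) (h2 : P 1 f2) (h3 : P 1 f3)
    (h4 : P 1 f4) (k : ℕ) : P k (quadColumn g f1 f2 f3 f4 k) := by
  have pow : ∀ {f : R⟦X⟧}, P 1 f → ∀ e : ℕ, P e (f ^ e) := by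
    intro f hf e
    induction e with
    | zero => rwa [pow_zero]
    | succ e ih => rw [pow_succ]; exact mul ih hf
  have hcol := mul (mul (mul (mul hg (pow h1 ((k + 3) / 4))) (pow h2 ((k + 2) / 4)))
    (pow h3 ((k + 1) / 4))) (pow h4 (k / 4))
  rwa [zero_add, show (k + 3) / 4 + (k + 2) / 4 + (k + 1) / 4 + k / 4 = k by omega] at hcol

end QuadColumn

theorem quadrupleRiordan_triangular_checkerboard
    (g f1 f2 f3 f4 : PowerSeries ℚ)
    (hg : ∀ n : ℕ, n % 4 ≠ 0 → coeff n g = 0) (hg0 : coeff 0 g = 1)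
    (hf1 : ∀ n : ℕ, n % 4 ≠ 1 → coeff n f1 = 0) (hf1' : coeff 1 f1 = 1)
    (hf2 : ∀ n : ℕ, n % 4 ≠ 1 → coeff n f2 = 0) (hf2' : coeff 1 f2 = 1)
    (hf3 : ∀ n : ℕ, n % 4 ≠ 1 → coeff n f3 = 0) (hf3' : coeff 1 f3 = 1)
    (hf4 : ∀ n : ℕ, n % 4 ≠ 1 → coeff n f4 = 0) (hf4' : coeff 1 f4 = 1) :
    (∀ n k : ℕ, n < k → quadEntry g f1 f2 f3 f4 n k = 0) ∧
      (∀ n : ℕ, quadEntry g f1 f2 f3 f4 n n = 1) ∧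
      (∀ n k : ℕ, n % 4 ≠ k % 4 → quadEntry g f1 f2 f3 f4 n k = 0) := by
  have monic (f : PowerSeries ℚ) (hf : ∀ n : ℕ, n % 4 ≠ 1 → coeff n f = 0)
      (hf' : coeff 1 f = 1) : HasMonicOrder 1 f :=
    .of_coeff_one (by rw [← coeff_zero_eq_constantCoeff_apply]; exact hf 0 (by decide)) hf'
  have hmonic (k : ℕ) : HasMonicOrder k (quadColumn g f1 f2 f3 f4 k) :=
    quadColumn_induction _ .one .mul
      (.of_constantCoeff (by rwa [← coeff_zero_eq_constantCoeff_apply]))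
      (monic f1 hf1 hf1') (monic f2 hf2 hf2') (monic f3 hf3 hf3') (monic f4 hf4 hf4') k
  have hresidue (k : ℕ) : ResidueSupported 4 k (quadColumn g f1 f2 f3 f4 k) :=
    quadColumn_induction _ .one .mul hg hf1 hf2 hf3 hf4 k
  simp only [quadEntry_eq_coeff_quadColumn]
  exact ⟨fun n k hnk => (hmonic k).coeff_of_lt hnk, fun n => (hmonic n).coeff_self,
    fun n k hnk => hresidue k n hnk⟩
end
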